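/- Label designation subsumption: fix a may-must argumentation F = (A, R, f_Q) and an argument a ∈ A. Say a is in acceptance-state must (resp. may_s, not) under λ if n₂ ≤ o (resp. n₁ ≤ o < n₂, o < n₁), and analogously for rejection-states with i and (m₁,m₂), where o, i count attackers of a labelled out, in by λ. If λ₁ puts a in acceptance-state x and rejection-state y, λ₂ puts a in acceptance-state may_s and rejection-state y, and λ₃ puts a in acceptance-state x and rejection-state may_s, then: every label designated for a by λ₁ is also designated for a by λ₂ and by λ₃. -/

import Mathlib

/-! Whether `lam` designates a label for `a` depends only on the acceptance and rejection states
of `a` under `lam`. Read off on states, `in` needs acceptance ≠ not and rejection ≠ must, `out`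
needs rejection ≠ not and acceptance ≠ must, and `undec` holds at `may_s` in either coordinate,
so replacing either state by `may_s` never loses a designated label. -/

inductive Lab : Type
  | inn | out | undec
deriving DecidableEq

structure MMA (A : Type) [Fintype A] [DecidableEq A] where
  R : A → A → Prop
  decR : DecidableRel R
  n1 : A → ℕ
  n2 : A → ℕ
  m1 : A → ℕ
  m2 : A → ℕ
  hn : ∀ a, n1 a ≤ n2 a
  hm : ∀ a, m1 a ≤ m2 a

variable {A : Type} [Fintype A] [DecidableEq A]

/-- Number of attackers of `a` labelled `out` by `lam`. -/
def outCnt (F : MMA A) (lam : A → Lab) (a : A) : ℕ :=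
  letI := F.decR
  (Finset.univ.filter (fun b => F.R b a ∧ lam b = Lab.out)).card

/-- Number of attackers of `a` labelled `in` by `lam`. -/
def inCnt (F : MMA A) (lam : A → Lab) (a : A) : ℕ :=
  letI := F.decR
  (Finset.univ.filter (fun b => F.R b a ∧ lam b = Lab.inn)).card

/-- `lam` designates label `l` for argument `a` in `F`. -/
def designates (F : MMA A) (lam : A → Lab) (a : A) : Lab → Prop
  | Lab.inn => F.n1 a ≤ outCnt F lam a ∧ inCnt F lam a < F.m2 a
  | Lab.out => F.m1 a ≤ inCnt F lam a ∧ outCnt F lam a < F.n2 a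
  | Lab.undec =>
      (F.n2 a ≤ outCnt F lam a ∧ F.m2 a ≤ inCnt F lam a) ∨
      (F.n1 a ≤ outCnt F lam a ∧ outCnt F lam a < F.n2 a) ∨
      (F.m1 a ≤ inCnt F lam a ∧ inCnt F lam a < F.m2 a) ∨
      (outCnt F lam a < F.n1 a ∧ inCnt F lam a < F.m1 a)

/-- `a`'s label is proper under `lam`. -/
def proper (F : MMA A) (lam : A → Lab) (a : A) : Prop :=
  designates F lam a (lam a)

/-- Exact labelling: every argument's label is proper. -/
def exactLab (F : MMA A) (lam : A → Lab) : Prop :=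
  ∀ a, proper F lam a

/-- Pre-maximally proper labelling. -/
def preMaxProper (F : MMA A) (lam : A → Lab) : Prop :=
  ∀ a, proper F lam a ∨ lam a = Lab.undec

/-- Maximally proper labelling. -/
def maxProper (F : MMA A) (lam : A → Lab) : Prop :=
  preMaxProper F lam ∧
    ∀ lam', preMaxProper F lam' → ∀ a, proper F lam' a → proper F lam a

/-- The order `⪯` on labellings. -/
def labLE (l1 l2 : A → Lab) : Prop :=
  ∀ a, (l1 a = Lab.inn → l2 a = Lab.inn) ∧ (l1 a = Lab.out → l2 a = Lab.out)

inductive MState : Type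
  | must | mays | nots

/-- Acceptance state of `a` under `lam`. -/
def accSt (F : MMA A) (lam : A → Lab) (a : A) : MState → Prop
  | MState.must => F.n2 a ≤ outCnt F lam a
  | MState.mays => F.n1 a ≤ outCnt F lam a ∧ outCnt F lam a < F.n2 a
  | MState.nots => outCnt F lam a < F.n1 a

/-- Rejection state of `a` under `lam`. -/
def rejSt (F : MMA A) (lam : A → Lab) (a : A) : MState → Prop
  | MState.must => F.m2 a ≤ inCnt F lam a
  | MState.mays => F.m1 a ≤ inCnt F lam a ∧ inCnt F lam a < F.m2 a
  | MState.nots => inCnt F lam a < F.m1 a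

def MState.designates (x y : MState) : Lab → Prop
  | Lab.inn => x ≠ MState.nots ∧ y ≠ MState.must
  | Lab.out => y ≠ MState.nots ∧ x ≠ MState.must
  | Lab.undec =>
      (x = MState.must ∧ y = MState.must) ∨ x = MState.mays ∨ y = MState.mays ∨
        (x = MState.nots ∧ y = MState.nots)

theorem designates_iff_of_accSt_of_rejSt {F : MMA A} {lam : A → Lab} {a : A} {x y : MState}
    (hx : accSt F lam a x) (hy : rejSt F lam a y) (l : Lab) :
    designates F lam a l ↔ x.designates y l := by
  have hn := F.hn a
  have hm := F.hm a
  cases x <;> cases y <;> cases l <;>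
    simp only [accSt, rejSt, designates, MState.designates, ne_eq, reduceCtorEq, not_false_eq_true,
      not_true_eq_false, and_true, and_false, or_false, or_true, iff_true, iff_false, not_and,
      not_lt] at hx hy ⊢ <;> omega

theorem MState.designates.mays_left {x y : MState} {l : Lab} (h : x.designates y l) :
    MState.mays.designates y l := by
  cases x <;> cases y <;> cases l <;> simp_all [MState.designates]

theorem MState.designates.mays_right {x y : MState} {l : Lab} (h : x.designates y l) :
    x.designates MState.mays l := by
  cases x <;> cases y <;> cases l <;> simp_all [MState.designates]

theorem stmt12 (F : MMA A) (a : A) (x y : MState)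
    (lam1 lam2 lam3 : A → Lab)
    (h1a : accSt F lam1 a x) (h1r : rejSt F lam1 a y)
    (h2a : accSt F lam2 a MState.mays) (h2r : rejSt F lam2 a y)
    (h3a : accSt F lam3 a x) (h3r : rejSt F lam3 a MState.mays) :
    ∀ l : Lab, designates F lam1 a l →
      designates F lam2 a l ∧ designates F lam3 a l := by
  intro l hl
  rw [designates_iff_of_accSt_of_rejSt h1a h1r] at hl
  rw [designates_iff_of_accSt_of_rejSt h2a h2r, designates_iff_of_accSt_of_rejSt h3a h3r]
  exact ⟨hl.mays_left, hl.mays_right⟩
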